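/- Let P be a preference profile over a finite candidate set C (|C| ≥ 2) with an odd number n of voters, and let S ⊆ C be a minimum-cardinality set such that M_{x,y} > 0 for all x ∈ S and y ∈ C ∖ S (a Smith set of P). Assume |S| ≤ 3. Let f be a voting rule, defined on P and on every profile P_{-z} obtained from P by deleting one candidate, such that: (i) f is resolute on these profiles (f always returns a singleton); (ii) f satisfies the Smith criterion on these profiles (the winner always belongs to a minimum-cardinality Smith set of the profile at hand); and (iii) f is independent of Smith-dominated alternatives: for every z ∈ C ∖ S, f(P_{-z}) = f(P). Then for every pair of distinct candidates {x,y} ⊆ C there exists z ∈ {x,y} such that, setting P' = P_{-z}: (1) for all u ∉ {x,y}, u ∈ f(P) iff u ∈ f(P'); and (2) f(P) ∩ {x,y} ≠ ∅ iff f(P') ∩ {x,y} ≠ ∅. In particular, f is weakly independent of α-deletion clones and of β-swap clones for all α ≥ 0 and β ≥ 0 on such profiles. -/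

import Mathlib

open Finset

/-- A ranking (strict total order) of the candidate set `D`, encoded as a
duplicate-free list (best candidate first) whose set of elements is exactly `D`. -/
def Ranking {C : Type*} [DecidableEq C] (D : Finset C) : Type _ :=
  {l : List C // l.Nodup ∧ l.toFinset = D}

/-- The (0-indexed) position of candidate `x` in ranking `r`. -/
def rpos {C : Type*} [DecidableEq C] {D : Finset C} (r : Ranking D) (x : C) : ℕ :=
  r.val.idxOf x

/-- Delete candidate `x` from a ranking. -/
def eraseCand {C : Type*} [DecidableEq C] {D : Finset C} (x : C) (r : Ranking D) :
    Ranking (D.erase x) :=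
  ⟨r.val.erase x, r.2.1.erase x, by
    ext c
    simp [List.Nodup.mem_erase_iff r.2.1, Finset.mem_erase, ← r.2.2]⟩

/-- The pairwise margin `M_{x,y}` of `x` over `y` in a profile. -/
def margin {C : Type*} [DecidableEq C] {D : Finset C} {n : ℕ}
    (P : Fin n → Ranking D) (x y : C) : ℤ :=
  ((univ.filter fun i => rpos (P i) x < rpos (P i) y).card : ℤ) -
    ((univ.filter fun i => rpos (P i) y < rpos (P i) x).card : ℤ)

/-- `S` dominates the rest of the candidate set `D`: every member of `S` has strictly
positive margin against every candidate of `D` outside `S`. -/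
def Dominating {C : Type*} [DecidableEq C] {D : Finset C} {n : ℕ}
    (P : Fin n → Ranking D) (S : Finset C) : Prop :=
  S.Nonempty ∧ S ⊆ D ∧ ∀ x ∈ S, ∀ y ∈ D, y ∉ S → 0 < margin P x y

/-- `S` is a Smith set of the profile `P` over `D`: a dominating set of minimum cardinality. -/
def IsSmithSet {C : Type*} [DecidableEq C] {D : Finset C} {n : ℕ}
    (P : Fin n → Ranking D) (S : Finset C) : Prop :=
  Dominating P S ∧ ∀ T : Finset C, Dominating P T → S.card ≤ T.card

/-!
Inside the Smith set `S` no candidate beats all the others, since it would be a Condorcet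
winner and `{a}` a smaller dominating set. With an odd number of voters every pair is decided,
so a Smith set with two members `x, y` is a cycle `x → y → c → x`, and the rule's winner lies
in it. Deleting a member outside `S` changes nothing. Otherwise delete the one of `x, y` that
leaves the winner untouched: if the winner is `c`, removing `y` keeps `c` a Condorcet winner;
if it is `x` or `y`, removing `x` makes `y` a Condorcet winner, so the winner stays in `{x, y}`.
-/

theorem List.idxOf_erase_lt_idxOf_erase_iff {α : Type*} [DecidableEq α] (l : List α)
    {x y z : α} (hx : x ≠ z) (hy : y ≠ z) :
    (l.erase z).idxOf x < (l.erase z).idxOf y ↔ l.idxOf x < l.idxOf y := by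
  induction l with
  | nil => simp
  | cons a t ih =>
    rcases eq_or_ne a z with rfl | haz
    · rw [List.erase_cons_head, List.idxOf_cons_ne _ hx.symm, List.idxOf_cons_ne _ hy.symm]
      omega
    · rw [List.erase_cons_tail (by simpa using haz)]
      by_cases hxa : x = a <;> by_cases hya : y = a
      · simp [hxa, hya]
      · subst hxa
        simp [List.idxOf_cons_ne _ (Ne.symm hya)]
      · subst hya
        simp [List.idxOf_cons_ne _ (Ne.symm hxa)]
      · simp only [List.idxOf_cons_ne _ (Ne.symm hxa), List.idxOf_cons_ne _ (Ne.symm hya)]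
        omega

section

variable {C : Type*} [DecidableEq C] {D : Finset C} {n : ℕ}

theorem margin_eraseCand (P : Fin n → Ranking D) {x y z : C} (hx : x ≠ z) (hy : y ≠ z) :
    margin (fun i => eraseCand z (P i)) x y = margin P x y := by
  simp only [margin, rpos, eraseCand, List.idxOf_erase_lt_idxOf_erase_iff _ hx hy,
    List.idxOf_erase_lt_idxOf_erase_iff _ hy hx]
  congr

theorem margin_swap (P : Fin n → Ranking D) (x y : C) : margin P y x = -margin P x y := by
  unfold margin
  ring

theorem ne_of_margin_pos {P : Fin n → Ranking D} {x y : C} (h : 0 < margin P x y) : x ≠ y := by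
  rintro rfl
  have := margin_swap P x x
  omega

theorem not_margin_pos_of_margin_pos {P : Fin n → Ranking D} {x y : C}
    (h : 0 < margin P x y) : ¬0 < margin P y x := by
  rw [margin_swap]
  omega

theorem margin_pos_or_margin_pos (hodd : Odd n) (P : Fin n → Ranking D) {x y : C}
    (hx : x ∈ D) (hxy : x ≠ y) : 0 < margin P x y ∨ 0 < margin P y x := by
  have hpos_ne : ∀ i, rpos (P i) x ≠ rpos (P i) y := fun i h =>
    hxy ((List.idxOf_inj (by rw [← List.mem_toFinset, (P i).2.2]; exact hx)).mp h)
  have hsum : (univ.filter fun i => rpos (P i) x < rpos (P i) y).card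
      + (univ.filter fun i => rpos (P i) y < rpos (P i) x).card = n := by
    have hsplit :=
      card_filter_add_card_filter_not (s := univ) fun i => rpos (P i) x < rpos (P i) y
    rw [card_univ, Fintype.card_fin] at hsplit
    convert hsplit using 3
    ext i
    simp only [mem_filter, mem_univ, true_and]
    have := hpos_ne i
    omega
  unfold margin
  obtain ⟨k, rfl⟩ := hodd
  omega

def IsCondorcetWinner (P : Fin n → Ranking D) (a : C) : Prop :=
  a ∈ D ∧ ∀ b ∈ D, b ≠ a → 0 < margin P a b

theorem IsCondorcetWinner.isSmithSet_singleton {P : Fin n → Ranking D} {a : C}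
    (ha : IsCondorcetWinner P a) : IsSmithSet P {a} :=
  ⟨⟨singleton_nonempty a, singleton_subset_iff.mpr ha.1,
      fun _ hu b hb hba => mem_singleton.mp hu ▸ ha.2 b hb (notMem_singleton.mp hba)⟩,
    fun _ hT => hT.1.card_pos⟩

theorem Dominating.subset_or_subset {P : Fin n → Ranking D} {A B : Finset C}
    (hA : Dominating P A) (hB : Dominating P B) : A ⊆ B ∨ B ⊆ A := by
  by_contra! h
  obtain ⟨a, ha, haB⟩ := not_subset.mp h.1
  obtain ⟨b, hb, hbA⟩ := not_subset.mp h.2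
  exact not_margin_pos_of_margin_pos (hA.2.2 a ha b (hB.2.1 hb) hbA)
    (hB.2.2 b hb a (hA.2.1 ha) haB)

theorem IsSmithSet.unique {P : Fin n → Ranking D} {S T : Finset C}
    (hS : IsSmithSet P S) (hT : IsSmithSet P T) : S = T := by
  rcases hS.1.subset_or_subset hT.1 with h | h
  · exact eq_of_subset_of_card_le h (hT.2 S hS.1)
  · exact (eq_of_subset_of_card_le h (hS.2 T hT.1)).symm

theorem Dominating.isCondorcetWinner {P : Fin n → Ranking D} {S : Finset C} {a : C}
    (hS : Dominating P S) (ha : a ∈ S) (hbeats : ∀ b ∈ S, b ≠ a → 0 < margin P a b) :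
    IsCondorcetWinner P a := by
  refine ⟨hS.2.1 ha, fun b hb hba => ?_⟩
  by_cases hbS : b ∈ S
  · exact hbeats b hbS hba
  · exact hS.2.2 a ha b hb hbS

theorem Dominating.isCondorcetWinner_eraseCand {P : Fin n → Ranking D} {S : Finset C} {a z : C}
    (hS : Dominating P S) (ha : a ∈ S) (haz : a ≠ z)
    (hbeats : ∀ b ∈ S, b ≠ z → b ≠ a → 0 < margin P a b) :
    IsCondorcetWinner (fun i => eraseCand z (P i)) a := by
  refine ⟨mem_erase.mpr ⟨haz, hS.2.1 ha⟩, fun b hb hba => ?_⟩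
  obtain ⟨hbz, hbD⟩ := mem_erase.mp hb
  rw [margin_eraseCand P haz hbz]
  by_cases hbS : b ∈ S
  · exact hbeats b hbS hbz hba
  · exact hS.2.2 a ha b hbD hbS

theorem eq_singleton_of_isCondorcetWinner {P : Fin n → Ranking D} {F : Finset C} {a : C}
    (hres : F.card = 1) (hsc : ∀ w ∈ F, ∃ S : Finset C, IsSmithSet P S ∧ w ∈ S)
    (ha : IsCondorcetWinner P a) : F = {a} := by
  obtain ⟨w, rfl⟩ := card_eq_one.mp hres
  obtain ⟨S, hS, hwS⟩ := hsc w (mem_singleton_self w)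
  rw [hS.unique ha.isSmithSet_singleton, mem_singleton] at hwS
  rw [hwS]

theorem IsSmithSet.exists_margin_pos (hodd : Odd n) {P : Fin n → Ranking D} {S : Finset C}
    {a b : C} (hS : IsSmithSet P S) (ha : a ∈ S) (hb : b ∈ S) (hba : b ≠ a) :
    ∃ c ∈ S, 0 < margin P c a := by
  by_contra! hnone
  have hwin : IsCondorcetWinner P a := hS.1.isCondorcetWinner ha fun c hc hca =>
    (margin_pos_or_margin_pos hodd P (hS.1.2.1 hc) hca).resolve_left (hnone c hc).not_gt
  rw [hS.unique hwin.isSmithSet_singleton, mem_singleton] at hb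
  exact hba hb

theorem IsSmithSet.eq_three_cycle (hodd : Odd n) {P : Fin n → Ranking D} {S : Finset C}
    {x y : C} (hS : IsSmithSet P S) (hS3 : S.card ≤ 3) (hx : x ∈ S) (hy : y ∈ S)
    (hxy : 0 < margin P x y) :
    ∃ c, 0 < margin P y c ∧ 0 < margin P c x ∧ S = {x, y, c} := by
  obtain ⟨c, hc, hcx⟩ := hS.exists_margin_pos hodd hx hy (ne_of_margin_pos hxy).symm
  have hcy : c ≠ y := by
    rintro rfl
    exact not_margin_pos_of_margin_pos hxy hcx
  have hSeq : S = {x, y, c} := by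
    refine (eq_of_subset_of_card_le ?_ ?_).symm
    · simp only [insert_subset_iff, singleton_subset_iff]
      exact ⟨hx, hy, hc⟩
    · rwa [card_eq_three.mpr
        ⟨x, y, c, ne_of_margin_pos hxy, (ne_of_margin_pos hcx).symm, hcy.symm, rfl⟩]
  obtain ⟨d, hd, hdc⟩ := hS.exists_margin_pos hodd hc hx (ne_of_margin_pos hcx).symm
  rw [hSeq, mem_insert, mem_insert, mem_singleton] at hd
  rcases hd with rfl | rfl | rfl
  · exact absurd hcx (not_margin_pos_of_margin_pos hdc)
  · exact ⟨c, hdc, hcx, hSeq⟩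
  · exact absurd rfl (ne_of_margin_pos hdc)

end

theorem smith_rule_weakly_indep_general
    (C : Type*) [Fintype C] [DecidableEq C]
    (n : ℕ) (hodd : Odd n) (P : Fin n → Ranking (univ : Finset C))
    (S : Finset C) (hSmith : IsSmithSet P S) (hS3 : S.card ≤ 3)
    (f : (D : Finset C) → (Fin n → Ranking D) → Finset C)
    -- (i) resoluteness on the profiles at hand
    (hres : (f univ P).card = 1)
    (hres' : ∀ z : C, (f (univ.erase z) (fun i => eraseCand z (P i))).card = 1)
    -- (ii) Smith criterion on the profiles at hand
    (hsc : ∀ w ∈ f univ P, ∃ S' : Finset C, IsSmithSet P S' ∧ w ∈ S')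
    (hsc' : ∀ z : C, ∀ w ∈ f (univ.erase z) (fun i => eraseCand z (P i)),
      ∃ S' : Finset C, IsSmithSet (fun i => eraseCand z (P i)) S' ∧ w ∈ S')
    -- (iii) independence of Smith-dominated alternatives
    (hisda : ∀ z : C, z ∉ S → f (univ.erase z) (fun i => eraseCand z (P i)) = f univ P) :
    ∀ x y : C, x ≠ y → ∃ z : C, (z = x ∨ z = y) ∧
      (∀ u : C, u ≠ x → u ≠ y →
        (u ∈ f univ P ↔ u ∈ f (univ.erase z) (fun i => eraseCand z (P i)))) ∧
      ((f univ P ∩ {x, y}).Nonempty ↔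
        (f (univ.erase z) (fun i => eraseCand z (P i)) ∩ {x, y}).Nonempty) := by
  intro x y hxy
  rcases em' (x ∈ S) with hx | hx
  · exact ⟨x, .inl rfl, fun u _ _ => by rw [hisda x hx], by rw [hisda x hx]⟩
  rcases em' (y ∈ S) with hy | hy
  · exact ⟨y, .inr rfl, fun u _ _ => by rw [hisda y hy], by rw [hisda y hy]⟩
  wlog hxy' : 0 < margin P x y generalizing x y
  · obtain ⟨z, hz, hoff, hpair⟩ := this y x hxy.symm hy hx
      ((margin_pos_or_margin_pos hodd P (mem_univ x) hxy).resolve_left hxy')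
    exact ⟨z, hz.symm, fun u hux huy => hoff u huy hux, by rwa [pair_comm]⟩
  obtain ⟨c, hyc, hcx, rfl⟩ := hSmith.eq_three_cycle hodd hS3 hx hy hxy'
  obtain ⟨w, hw⟩ := card_eq_one.mp hres
  obtain ⟨S', hS', hwS'⟩ := hsc w (by simp [hw])
  rw [hS'.unique hSmith, mem_insert, mem_insert, mem_singleton] at hwS'
  have hdel_x : f (univ.erase x) (fun i => eraseCand x (P i)) = {y} :=
    eq_singleton_of_isCondorcetWinner (hres' x) (hsc' x) <|
      hSmith.1.isCondorcetWinner_eraseCand (by simp) hxy.symm (by simp [hyc])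
  have hdel_y : f (univ.erase y) (fun i => eraseCand y (P i)) = {c} :=
    eq_singleton_of_isCondorcetWinner (hres' y) (hsc' y) <|
      hSmith.1.isCondorcetWinner_eraseCand (by simp) (ne_of_margin_pos hyc).symm (by simp [hcx])
  rcases hwS' with hwx | hwy | hwc
  · exact ⟨x, .inl rfl, by simp +contextual [hw, hdel_x, hwx]⟩
  · exact ⟨x, .inl rfl, by simp +contextual [hw, hdel_x, hwy]⟩
  · exact ⟨y, .inr rfl, fun u _ _ => by rw [hw, hdel_y, hwc], by rw [hw, hdel_y, hwc]⟩

/-- **Smith-based rules are weakly independent of approximate clones when the Smith set has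
size at most 3 (odd number of voters).**
Let `P` be a profile over a finite candidate set `C` (`|C| ≥ 2`) with an odd number `n` of
voters, and `S` a Smith set of `P` with `|S| ≤ 3`. Let `f` be a voting rule (defined on `P`
and on every one-candidate-deleted profile `P₋z`) that (i) is resolute on these profiles,
(ii) satisfies the Smith criterion on these profiles, and (iii) is independent of
Smith-dominated alternatives: `f(P₋z) = f(P)` for every `z ∉ S`. Then for every pair of
distinct candidates `{x,y}` there is a `z ∈ {x,y}` such that, letting `P' = P₋z`,
(1) for all `u ∉ {x,y}`, `u ∈ f(P) ↔ u ∈ f(P')`, and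
(2) `f(P) ∩ {x,y} ≠ ∅ ↔ f(P') ∩ {x,y} ≠ ∅`. In particular `f` is weakly independent of
`α`-deletion clones and `β`-swap clones on such profiles. -/
theorem smith_rule_weakly_indep
    (C : Type*) [Fintype C] [DecidableEq C] (hC : 2 ≤ Fintype.card C)
    (n : ℕ) (hodd : Odd n) (P : Fin n → Ranking (univ : Finset C))
    (S : Finset C) (hSmith : IsSmithSet P S) (hS3 : S.card ≤ 3)
    (f : (D : Finset C) → (Fin n → Ranking D) → Finset C)
    -- (i) resoluteness on the profiles at hand
    (hres : (f univ P).card = 1)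
    (hres' : ∀ z : C, (f (univ.erase z) (fun i => eraseCand z (P i))).card = 1)
    -- (ii) Smith criterion on the profiles at hand
    (hsc : ∀ w ∈ f univ P, ∃ S' : Finset C, IsSmithSet P S' ∧ w ∈ S')
    (hsc' : ∀ z : C, ∀ w ∈ f (univ.erase z) (fun i => eraseCand z (P i)),
      ∃ S' : Finset C, IsSmithSet (fun i => eraseCand z (P i)) S' ∧ w ∈ S')
    -- (iii) independence of Smith-dominated alternatives
    (hisda : ∀ z : C, z ∉ S → f (univ.erase z) (fun i => eraseCand z (P i)) = f univ P) :
    ∀ x y : C, x ≠ y → ∃ z : C, (z = x ∨ z = y) ∧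
      (∀ u : C, u ≠ x → u ≠ y →
        (u ∈ f univ P ↔ u ∈ f (univ.erase z) (fun i => eraseCand z (P i)))) ∧
      ((f univ P ∩ {x, y}).Nonempty ↔
        (f (univ.erase z) (fun i => eraseCand z (P i)) ∩ {x, y}).Nonempty) :=
  smith_rule_weakly_indep_general C n hodd P S hSmith hS3 f hres hres' hsc hsc' hisda
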